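/- arXiv:2005.08014 — 19 statements merged into one kernel-verified Lean document; each statement's English description precedes it below -/
import Mathlib

section
/- Let R be a *-ring and a, x ∈ R. If a = xa² and (ax)* = xa, then xa = ax. -/
/-- Lemma 2.1: In a *-ring, if `a = x * a ^ 2` and `(a * x)* = x * a`,
then `x * a = a * x`. -/
theorem stmt_0 {R : Type*} [Ring R] [StarRing R] (a x : R)
    (h1 : a = x * a ^ 2) (h2 : star (a * x) = x * a) :
    x * a = a * x := by
  have h3 : a * x = (x * a) * (a * x) := by
    conv_lhs => rw [h1]
    noncomm_ring
  have h4 : star (x * a) = a * x := by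
    rw [← h2, star_star]
  have h5 : x * a = (x * a) * (a * x) := by
    calc x * a = star (a * x) := h2.symm
    _ = star (x * a * (a * x)) := by rw [← h3]
    _ = star (a * x) * star (x * a) := by rw [star_mul]
    _ = (x * a) * (a * x) := by rw [h2, h4]
  rw [h5, ← h3]
end

section
/- Let R be a *-ring and a, x ∈ R. If x = ax² and (ax)* = xa, then xa = ax. -/
/-- Remark 2.2(1): In a *-ring, if `x = a * x ^ 2` and `(a * x)* = x * a`,
then `x * a = a * x`. -/
theorem stmt_1 {R : Type*} [Ring R] [StarRing R] (a x : R)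
    (h1 : x = a * x ^ 2) (h2 : star (a * x) = x * a) :
    x * a = a * x := by
  have key : (a * x) * (x * a) = x * a := by
    have h : (a * x) * (x * a) = (a * x ^ 2) * a := by
      rw [pow_two]; noncomm_ring
    rw [h, ← h1]
  have h2' : star (x * a) = a * x := by rw [← h2, star_star]
  have key2 : (a * x) * (x * a) = a * x := by
    have := congrArg star key
    rw [star_mul, h2', h2] at this
    exact this
  rw [← key, key2]
end

section
/- Let R be a *-ring and a ∈ R. Then the following are equivalent: (1) a is an EP element; (2) there exists x ∈ R such that a = xa² and (ax)* = xa; (3) there exists x ∈ R such that a = a²x and (ax)* = xa. Moreover, in case (2) or (3), the element y = xax is simultaneously the group inverse and the Moore–Penrose inverse of a (i.e. aya = a, yay = y, ay = ya, and (ay)* = ay). -/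
/-- An element `a` of a *-ring is EP if there exists `y` with
`a*y*a = a`, `y*a*y = y`, `a*y = y*a`, and `(a*y)* = a*y`;
such a `y` is simultaneously the group inverse and the Moore–Penrose inverse of `a`. -/
def IsEP {R : Type*} [Ring R] [StarRing R] (a : R) : Prop :=
  ∃ y : R, a * y * a = a ∧ y * a * y = y ∧ a * y = y * a ∧ star (a * y) = a * y

private lemma core_aux {R : Type*} [Ring R] [StarRing R] (a x : R)
    (h2 : star (a * x) = x * a) (comm : a * x = x * a) (haxa : a * (x * a) = a) :
    a * (x * a * x) * a = a ∧ (x * a * x) * a * (x * a * x) = x * a * x ∧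
      a * (x * a * x) = (x * a * x) * a ∧ star (a * (x * a * x)) = a * (x * a * x) := by
  have haxa2 : a * x * a = a := by rw [mul_assoc]; exact haxa
  have L : ∀ t : R, a * (x * (a * t)) = a * t := by
    intro t
    rw [← mul_assoc, ← mul_assoc, haxa2]
  have hax : a * (x * a * x) = a * x := by
    simp only [mul_assoc]; exact L x
  have hxa : (x * a * x) * a = x * a := by
    simp only [mul_assoc]; rw [haxa]
  refine ⟨?_, ?_, ?_, ?_⟩
  · simp only [mul_assoc]
    rw [L, haxa]
  · simp only [mul_assoc]
    rw [L, L]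
  · rw [hax, hxa]; exact comm
  · rw [hax, h2]; exact comm.symm

private lemma aux2 {R : Type*} [Ring R] [StarRing R] (a x : R)
    (h1 : a = x * a ^ 2) (h2 : star (a * x) = x * a) :
    a * x = x * a ∧ a * (x * a) = a := by
  have hsx : star (x * a) = a * x := by rw [← h2, star_star]
  have ha : x * (a * a) = a := by
    rw [← pow_two]; exact h1.symm
  have k1 : x * a * (a * x) = a * x := by
    have h : x * a * (a * x) = x * (a * a) * x := by noncomm_ring
    rw [h, ha]
  have comm : a * x = x * a := by
    have hc := congrArg star k1
    rw [star_mul, h2, hsx, k1] at hc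
    exact hc
  have haxa : a * (x * a) = a := by
    rw [← mul_assoc, comm, mul_assoc, ha]
  exact ⟨comm, haxa⟩

private lemma aux3 {R : Type*} [Ring R] [StarRing R] (a x : R)
    (h1 : a = a ^ 2 * x) (h2 : star (a * x) = x * a) :
    a * x = x * a ∧ a * (x * a) = a := by
  have hsx : star (x * a) = a * x := by rw [← h2, star_star]
  have ha : a * a * x = a := by
    rw [← pow_two]; exact h1.symm
  have k1 : x * a * (a * x) = x * a := by
    have h : x * a * (a * x) = x * (a * a * x) := by noncomm_ring
    rw [h, ha]
  have comm : a * x = x * a := by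
    have hc := congrArg star k1
    rw [star_mul, h2, hsx, k1] at hc
    exact hc.symm
  have haxa : a * (x * a) = a := by
    rw [← comm, ← mul_assoc, ha]
  exact ⟨comm, haxa⟩

/-- Theorem 2.3: `a` is EP iff there exists `x` with `a = x*a²` and `(a*x)* = x*a`,
iff there exists `x` with `a = a²*x` and `(a*x)* = x*a`.  Moreover, in either case
`y = x*a*x` is simultaneously the group inverse and the Moore–Penrose inverse of `a`. -/
theorem stmt_2 {R : Type*} [Ring R] [StarRing R] (a : R) :
    (IsEP a ↔ ∃ x : R, a = x * a ^ 2 ∧ star (a * x) = x * a) ∧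
    (IsEP a ↔ ∃ x : R, a = a ^ 2 * x ∧ star (a * x) = x * a) ∧
    (∀ x : R,
      ((a = x * a ^ 2 ∧ star (a * x) = x * a) ∨ (a = a ^ 2 * x ∧ star (a * x) = x * a)) →
      a * (x * a * x) * a = a ∧ (x * a * x) * a * (x * a * x) = x * a * x ∧
        a * (x * a * x) = (x * a * x) * a ∧ star (a * (x * a * x)) = a * (x * a * x)) := by
  refine ⟨⟨?_, ?_⟩, ⟨?_, ?_⟩, ?_⟩
  · rintro ⟨y, h1, hy2, h3, h4⟩
    refine ⟨y, ?_, ?_⟩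
    · have : y * a ^ 2 = a := by rw [pow_two, ← mul_assoc, ← h3, h1]
      exact this.symm
    · rw [h4]; exact h3
  · rintro ⟨x, h1, h2⟩
    obtain ⟨comm, haxa⟩ := aux2 a x h1 h2
    obtain ⟨c1, c2, c3, c4⟩ := core_aux a x h2 comm haxa
    exact ⟨x * a * x, c1, c2, c3, c4⟩
  · rintro ⟨y, h1, hy2, h3, h4⟩
    refine ⟨y, ?_, ?_⟩
    · have : a ^ 2 * y = a := by rw [pow_two, mul_assoc, h3, ← mul_assoc, h1]
      exact this.symm
    · rw [h4]; exact h3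
  · rintro ⟨x, h1, h2⟩
    obtain ⟨comm, haxa⟩ := aux3 a x h1 h2
    obtain ⟨c1, c2, c3, c4⟩ := core_aux a x h2 comm haxa
    exact ⟨x * a * x, c1, c2, c3, c4⟩
  · rintro x (⟨h1, h2⟩ | ⟨h1, h2⟩)
    · obtain ⟨comm, haxa⟩ := aux2 a x h1 h2
      exact core_aux a x h2 comm haxa
    · obtain ⟨comm, haxa⟩ := aux3 a x h1 h2
      exact core_aux a x h2 comm haxa
end

section
/- Let R be a *-ring and a ∈ R. Then a is an EP element if and only if there exists a unique x ∈ R such that axa = a, x = ax², and (ax)* = xa. In this case, x is simultaneously the group inverse and the Moore–Penrose inverse of a. -/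
private lemma aux_ep {R : Type*} [Ring R] [StarRing R] {a x : R}
    (h1 : a * x * a = a) (h2 : x = a * x ^ 2) (h3 : star (a * x) = x * a) :
    a * x * a = a ∧ x * a * x = x ∧ a * x = x * a ∧ star (a * x) = a * x := by
  have hstar : star (x * a) = a * x := by rw [← h3, star_star]
  have hfe : x * a = a * x * (x * a) := by
    nth_rewrite 1 [h2]; noncomm_ring
  have heq : a * x = x * a := by
    calc a * x = star (x * a) := hstar.symm
      _ = star (a * x * (x * a)) := by rw [← hfe]
      _ = star (x * a) * star (a * x) := by rw [star_mul]
      _ = a * x * (x * a) := by rw [hstar, h3]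
      _ = x * a := hfe.symm
  refine ⟨h1, ?_, heq, by rw [h3, ← heq]⟩
  calc x * a * x = a * x * x := by rw [← heq]
    _ = a * x ^ 2 := by noncomm_ring
    _ = x := h2.symm

/-- Proposition 2.5: `a` is EP iff there exists a unique `x` such that
`a*x*a = a`, `x = a*x²` and `(a*x)* = x*a`.  In this case `x` is simultaneously
the group inverse and the Moore–Penrose inverse of `a`. -/
theorem stmt_3 {R : Type*} [Ring R] [StarRing R] (a : R) :
    (IsEP a ↔ ∃! x : R, a * x * a = a ∧ x = a * x ^ 2 ∧ star (a * x) = x * a) ∧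
    (∀ x : R, (a * x * a = a ∧ x = a * x ^ 2 ∧ star (a * x) = x * a) →
      a * x * a = a ∧ x * a * x = x ∧ a * x = x * a ∧ star (a * x) = a * x) := by
  constructor
  · constructor
    · rintro ⟨y, h1, h2, h3, h4⟩
      refine ⟨y, ⟨h1, ?_, by rw [h4, h3]⟩, ?_⟩
      · calc y = y * a * y := h2.symm
          _ = a * y * y := by rw [h3]
          _ = a * y ^ 2 := by noncomm_ring
      · rintro x ⟨g1, g2, g3⟩
        obtain ⟨_, k2, k3, _⟩ := aux_ep g1 g2 g3
        -- p = a*x = x*a, q = a*y = y*a, p = q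
        have hpq : a * x = a * y := by
          calc a * x = a * y * a * x := by rw [h1]
            _ = y * a * (a * x) := by rw [h3]; noncomm_ring
            _ = y * a * (x * a) := by rw [k3]
            _ = y * (a * x * a) := by noncomm_ring
            _ = y * a := by rw [g1]
            _ = a * y := h3.symm
        calc x = x * a * x := k2.symm
          _ = x * (a * x) := by noncomm_ring
          _ = x * (a * y) := by rw [hpq]
          _ = x * a * y := by noncomm_ring
          _ = a * x * y := by rw [k3]
          _ = a * y * y := by rw [hpq]
          _ = y * a * y := by rw [h3]
          _ = y := h2
    · rintro ⟨x, ⟨g1, g2, g3⟩, _⟩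
      obtain ⟨k1, k2, k3, k4⟩ := aux_ep g1 g2 g3
      exact ⟨x, k1, k2, k3, k4⟩
  · rintro x ⟨g1, g2, g3⟩
    exact aux_ep g1 g2 g3
end

section
/- Let R be a *-ring and a ∈ R. Then a is an EP element if and only if there exists a unique x ∈ R such that axa = a, x = x²a, and (ax)* = xa. In this case, x is simultaneously the group inverse and the Moore–Penrose inverse of a. -/
private lemma ep_key {R : Type*} [Ring R] [StarRing R] (a x : R)
    (h1 : a * x * a = a) (h2 : x = x ^ 2 * a) (h3 : star (a * x) = x * a) :
    a * x = x * a ∧ x * a * x = x := by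
  have hq : star (x * a) = a * x := by rw [← h3, star_star]
  have hp : a * x = (a * x) * (x * a) := by
    conv_lhs => rw [h2]
    noncomm_ring
  have hq2 : x * a = (a * x) * (x * a) := by
    have h := congrArg star hp
    rw [h3] at h
    rw [star_mul, hq, h3] at h
    exact h
  have hcomm : a * x = x * a := hp.trans hq2.symm
  refine ⟨hcomm, ?_⟩
  calc x * a * x = x * (a * x) := by rw [mul_assoc]
    _ = x * (x * a) := by rw [hcomm]
    _ = x ^ 2 * a := by rw [pow_two, mul_assoc]
    _ = x := h2.symm

private lemma ep_uniq {R : Type*} [Ring R] (a x y : R)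
    (hx1 : a * x * a = a) (hx2 : x * a * x = x) (hx3 : a * x = x * a)
    (hy1 : a * y * a = a) (hy2 : y * a * y = y) (hy3 : a * y = y * a) : x = y := by
  have e1 : x * a = a * (x * y) * a := by
    calc x * a = x * (a * y * a) := by rw [hy1]
      _ = (x * a) * (y * a) := by noncomm_ring
      _ = (a * x) * (y * a) := by rw [hx3]
      _ = a * (x * y) * a := by noncomm_ring
  have e2 : a * y = a * (x * y) * a := by
    calc a * y = (a * x * a) * y := by rw [hx1]
      _ = (a * x) * (a * y) := by noncomm_ring
      _ = (a * x) * (y * a) := by rw [hy3]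
      _ = a * (x * y) * a := by noncomm_ring
  have h : a * x = x * a := hx3
  have hxy : x * a = a * y := e1.trans e2.symm
  calc x = x * a * x := hx2.symm
    _ = x * (a * x) := by rw [mul_assoc]
    _ = x * (x * a) := by rw [hx3]
    _ = x * (a * y) := by rw [hxy]
    _ = (x * a) * y := by rw [← mul_assoc]
    _ = (y * a) * y := by rw [hxy, hy3]
    _ = y := hy2


/-- Proposition 2.7(2): `a` is EP iff there exists a unique `x` such that
`a*x*a = a`, `x = x²*a` and `(ax)* = x*a`.  In this case `x` is simultaneously
the group inverse and the Moore–Penrose inverse of `a`. -/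
theorem stmt_4 {R : Type*} [Ring R] [StarRing R] (a : R) :
    (IsEP a ↔ ∃! x : R, a * x * a = a ∧ x = x ^ 2 * a ∧ star (a * x) = x * a) ∧
    (∀ x : R, (a * x * a = a ∧ x = x ^ 2 * a ∧ star (a * x) = x * a) →
      a * x * a = a ∧ x * a * x = x ∧ a * x = x * a ∧ star (a * x) = a * x) := by
  constructor
  · constructor
    · rintro ⟨y, hy1, hy2, hy3, hy4⟩
      refine ⟨y, ⟨hy1, ?_, ?_⟩, ?_⟩
      · calc y = y * a * y := hy2.symm
          _ = y * (a * y) := by rw [mul_assoc]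
          _ = y * (y * a) := by rw [hy3]
          _ = y ^ 2 * a := by rw [pow_two, mul_assoc]
      · rw [hy4]; exact hy3
      · rintro x ⟨hx1, hx2, hx3⟩
        obtain ⟨hc, hxx⟩ := ep_key a x hx1 hx2 hx3
        exact ep_uniq a x y hx1 hxx hc hy1 hy2 hy3
    · rintro ⟨x, ⟨h1, h2, h3⟩, -⟩
      obtain ⟨hc, hxx⟩ := ep_key a x h1 h2 h3
      exact ⟨x, h1, hxx, hc, by rw [h3]; exact hc.symm⟩
  · rintro x ⟨h1, h2, h3⟩
    obtain ⟨hc, hxx⟩ := ep_key a x h1 h2 h3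
    exact ⟨h1, hxx, hc, by rw [h3]; exact hc.symm⟩
end

section
/- Let R be a *-ring and a ∈ R. Then a is an EP element if and only if there exists a unique x ∈ R such that xa² = a, x = xax, and (ax)* = xa. In this case, x is simultaneously the group inverse and the Moore–Penrose inverse of a. -/
private lemma ep_of_conds {R : Type*} [Ring R] [StarRing R] (a x : R)
    (h1 : x * a ^ 2 = a) (h2 : x = x * a * x) (h3 : star (a * x) = x * a) :
    a * x * a = a ∧ x * a * x = x ∧ a * x = x * a ∧ star (a * x) = a * x := by
  have hfa : x * a * a = a := by rw [mul_assoc, ← sq, h1]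
  have hsxa : star (x * a) = a * x := by rw [← h3, star_star]
  have hA : star a * (a * x) = star a := by
    calc star a * (a * x) = star a * star (x * a) := by rw [hsxa]
      _ = star (x * a * a) := (star_mul (x * a) a).symm
      _ = star a := by rw [hfa]
  have hB : star (a * x) * (a * x) = star (a * x) := by
    calc star (a * x) * (a * x) = star x * star a * (a * x) := by rw [star_mul]
      _ = star x * (star a * (a * x)) := by rw [mul_assoc]
      _ = star x * star a := by rw [hA]
      _ = star (a * x) := (star_mul a x).symm
  have hC : star (a * x) * (a * x) = a * x := by
    have := congrArg star hB
    simpa [star_mul, star_star, mul_assoc] using this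
  have hcomm : a * x = x * a := (hC.symm.trans hB).trans h3
  refine ⟨?_, h2.symm, hcomm, h3.trans hcomm.symm⟩
  rw [hcomm, hfa]

private lemma gi_unique {R : Type*} [Ring R] (a x y : R)
    (hx1 : a * x * a = a) (hx2 : x * a * x = x) (hxc : a * x = x * a)
    (hy1 : a * y * a = a) (hy2 : y * a * y = y) (hyc : a * y = y * a) :
    x = y := by
  have hx' : x = x * x * a := by
    calc x = x * a * x := hx2.symm
      _ = x * (a * x) := by rw [mul_assoc]
      _ = x * (x * a) := by rw [hxc]
      _ = x * x * a := by rw [mul_assoc]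
  have hy' : y = a * (y * y) := by
    calc y = y * a * y := hy2.symm
      _ = a * y * y := by rw [hyc]
      _ = a * (y * y) := by rw [mul_assoc]
  have hxya : x = x * y * a := by
    calc x = x * x * a := hx'
      _ = x * x * (a * y * a) := by rw [hy1]
      _ = x * x * a * y * a := by rw [← mul_assoc, ← mul_assoc]
      _ = x * y * a := by rw [← hx']
  have hyxy : y = a * x * y := by
    calc y = a * (y * y) := hy'
      _ = a * x * a * (y * y) := by rw [hx1]
      _ = a * x * (a * (y * y)) := by rw [mul_assoc]
      _ = a * x * y := by rw [← hy']
  calc x = x * y * a := hxya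
    _ = x * (y * a) := by rw [mul_assoc]
    _ = x * (a * y) := by rw [hyc]
    _ = x * a * y := by rw [mul_assoc]
    _ = a * x * y := by rw [hxc]
    _ = y := hyxy.symm

/-- Proposition 2.7(8): `a` is EP iff there exists a unique `x` such that
`x*a² = a`, `x = x*a*x` and `(a*x)* = x*a`.  In this case `x` is simultaneously
the group inverse and the Moore–Penrose inverse of `a`. -/
theorem stmt_5 {R : Type*} [Ring R] [StarRing R] (a : R) :
    (IsEP a ↔ ∃! x : R, x * a ^ 2 = a ∧ x = x * a * x ∧ star (a * x) = x * a) ∧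
    (∀ x : R, (x * a ^ 2 = a ∧ x = x * a * x ∧ star (a * x) = x * a) →
      a * x * a = a ∧ x * a * x = x ∧ a * x = x * a ∧ star (a * x) = a * x) := by
  constructor
  · constructor
    · rintro ⟨y, h1, h2, h3, h4⟩
      refine ⟨y, ⟨?_, h2.symm, h4.trans h3⟩, ?_⟩
      · rw [sq, ← mul_assoc, ← h3, h1]
      · rintro z ⟨hz1, hz2, hz3⟩
        obtain ⟨k1, k2, k3, _⟩ := ep_of_conds a z hz1 hz2 hz3
        exact gi_unique a z y k1 k2 k3 h1 h2 h3
    · rintro ⟨x, ⟨hx1, hx2, hx3⟩, -⟩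
      exact ⟨x, ep_of_conds a x hx1 hx2 hx3⟩
  · rintro x ⟨hx1, hx2, hx3⟩
    exact ep_of_conds a x hx1 hx2 hx3
end

section
/- Let R be a *-ring and a ∈ R. Suppose a has a {1,3}-inverse, i.e. there exists w ∈ R with awa = a and (aw)* = aw. Then a is an EP element if and only if there exists x ∈ R such that a = axa and (ax)* = xa. -/
/-- Theorem 2.9: if `a` has a {1,3}-inverse, then `a` is EP iff
there exists `x` with `a = a*x*a` and `(a*x)* = x*a`. -/
theorem stmt_6 {R : Type*} [Ring R] [StarRing R] (a : R)
    (h13 : ∃ w : R, a * w * a = a ∧ star (a * w) = a * w) :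
    IsEP a ↔ ∃ x : R, a = a * x * a ∧ star (a * x) = x * a := by
  constructor
  · rintro ⟨y, h1, h2, h3, h4⟩
    exact ⟨y, h1.symm, by rw [h4, h3]⟩
  · rintro ⟨x, hx1, hx2⟩
    obtain ⟨w, hw1, hw2⟩ := h13
    -- star (x*a) = a*x
    have sxa : star (x * a) = a * x := by rw [← hx2, star_star]
    -- star w * star a = a * w
    have waw : star w * star a = a * w := by rw [← star_mul]; exact hw2
    -- L1 : star a * (a*w) = star a
    have L1 : star a * (a * w) = star a := by
      have h := congrArg star hw1
      rwa [star_mul, hw2] at h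
    -- K1 : star x * star a = x * a
    have K1 : star x * star a = x * a := by rw [← star_mul]; exact hx2
    -- L3 : star a * (x * a) = star a
    have L3 : star a * (x * a) = star a := by
      have h := congrArg star hx1.symm
      rwa [star_mul, hx2] at h
    -- L4 : a*w*(x*a) = a*w
    have L4 : a * w * (x * a) = a * w := by
      rw [← waw, mul_assoc, L3]
    -- L5 : a*x*(a*w) = a*w
    have L5 : a * x * (a * w) = a * w := by
      have h := congrArg star L4
      rwa [star_mul, hw2, sxa] at h
    -- K2 : a * (star x * star a) = a
    have K2 : a * (star x * star a) = a := by
      rw [K1, ← mul_assoc, ← hx1]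
    -- L2 : a * (a*w) = a
    have L2 : a * (a * w) = a :=
      calc a * (a * w) = a * (star x * star a) * (a * w) := by rw [K2]
        _ = a * (star x * (star a * (a * w))) := by simp only [mul_assoc]
        _ = a * (star x * star a) := by rw [L1]
        _ = a := K2
    -- e * e = e
    have ee : a * w * (a * w) = a * w := by rw [← mul_assoc, hw1]
    -- the EP inverse
    refine ⟨a * w * (x * (a * w)), ?_, ?_, ?_, ?_⟩ <;>
      [skip; skip; skip; skip]
    all_goals
      have ayE : a * (a * w * (x * (a * w))) = a * w := by
        rw [← mul_assoc, L2, ← mul_assoc]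
        exact L5
    all_goals
      have yaE : a * w * (x * (a * w)) * a = a * w := by
        calc a * w * (x * (a * w)) * a = a * w * (x * (a * w * a)) := by
              simp only [mul_assoc]
          _ = a * w * (x * a) := by rw [hw1]
          _ = a * w := L4
    · rw [ayE]; exact hw1
    · rw [yaE, ← mul_assoc, ee]
    · rw [ayE, yaE]
    · rw [ayE]; exact hw2
end

section
/- Let R be a *-ring and a ∈ R. Suppose a has a {1,4}-inverse, i.e. there exists w ∈ R with awa = a and (wa)* = wa. Then a is an EP element if and only if there exists x ∈ R such that a = axa and (ax)* = xa. -/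
/-- Proposition 2.10: if `a` has a {1,4}-inverse, then `a` is EP iff
there exists `x` with `a = a*x*a` and `(a*x)* = x*a`. -/
theorem stmt_7 {R : Type*} [Ring R] [StarRing R] (a : R)
    (h14 : ∃ w : R, a * w * a = a ∧ star (w * a) = w * a) :
    IsEP a ↔ ∃ x : R, a = a * x * a ∧ star (a * x) = x * a := by
  constructor
  · rintro ⟨y, h1, h2, h3, h4⟩
    exact ⟨y, h1.symm, h4.trans h3⟩
  · rintro ⟨x, hx1, hx2⟩
    obtain ⟨w, hw1, hw2⟩ := h14
    -- star (x*a) = a*x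
    have hxa : star (x * a) = a * x := by rw [← hx2, star_star]
    -- a*x = star a * star x
    have hB : a * x = star a * star x := by rw [← star_mul]; exact hxa.symm
    -- star a = a * (x * star a)
    have h5 : star a = a * (x * star a) := by
      calc star a = star (a * (x * a)) := by rw [← mul_assoc, ← hx1]
        _ = star (x * a) * star a := by rw [star_mul]
        _ = a * x * star a := by rw [hxa]
        _ = a * (x * star a) := by rw [mul_assoc]
    -- star a = w * (a * star a)
    have h8 : star a = w * (a * star a) := by
      calc star a = star (a * (w * a)) := by rw [← mul_assoc, hw1]
        _ = star (w * a) * star a := by rw [star_mul]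
        _ = w * a * star a := by rw [hw2]
        _ = w * (a * star a) := by rw [mul_assoc]
    -- a = star a * (star x * a)
    have e1 : a = star a * (star x * a) := by
      calc a = a * x * a := hx1
        _ = star a * star x * a := by rw [hB]
        _ = star a * (star x * a) := by rw [mul_assoc]
    -- key : w * (a * a) = a  (i.e. a = w * a²)
    have key1 : w * (a * a) = a := by
      have h' : a * a = a * (star a * (star x * a)) := congrArg (a * ·) e1
      rw [h', ← mul_assoc a, ← mul_assoc w, ← h8, ← e1]
    -- f5 : a * (x * (w * a)) = w * a
    have f5 : a * (x * (w * a)) = w * a := by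
      calc a * (x * (w * a))
          = a * (x * star (w * a)) := by rw [hw2]
        _ = a * (x * (star a * star w)) := by rw [star_mul]
        _ = (a * (x * star a)) * star w := by simp only [mul_assoc]
        _ = star a * star w := by rw [← h5]
        _ = star (w * a) := by rw [star_mul]
        _ = w * a := hw2
    -- a * y = w * a  where  y = w * (w * a)
    have hay : a * (w * (w * a)) = w * a := by
      conv_lhs => rw [← f5]
      calc a * (w * (a * (x * (w * a))))
          = (a * w * a) * (x * (w * a)) := by simp only [mul_assoc]
        _ = a * (x * (w * a)) := by rw [hw1]
        _ = w * a := f5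
    -- y * a = w * a
    have hya : w * (w * a) * a = w * a := by
      rw [mul_assoc, mul_assoc, key1]
    refine ⟨w * (w * a), ?_, ?_, ?_, ?_⟩
    · rw [hay, mul_assoc]; exact key1
    · calc w * (w * a) * a * (w * (w * a))
          = w * a * (w * (w * a)) := by rw [hya]
        _ = w * (a * (w * (w * a))) := by rw [mul_assoc]
        _ = w * (w * a) := by rw [hay]
    · rw [hay, hya]
    · rw [hay, hw2]
end

section
/- Let R be a *-ring and a ∈ R. Suppose a is Moore–Penrose invertible, i.e. there exists w ∈ R with awa = a, waw = w, (aw)* = aw, and (wa)* = wa. Then a is an EP element if and only if there exists x ∈ R such that a = axa and (ax)* = xa. -/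
/-- Corollary 2.11: if `a` is Moore–Penrose invertible, then `a` is EP iff
there exists `x` with `a = a*x*a` and `(a*x)* = x*a`. -/
theorem stmt_8 {R : Type*} [Ring R] [StarRing R] (a : R)
    (hmp : ∃ w : R, a * w * a = a ∧ w * a * w = w ∧
      star (a * w) = a * w ∧ star (w * a) = w * a) :
    IsEP a ↔ ∃ x : R, a = a * x * a ∧ star (a * x) = x * a := by
  obtain ⟨w, h1, h2, h3, h4⟩ := hmp
  constructor
  · rintro ⟨y, hy1, hy2, hy3, hy4⟩
    exact ⟨y, hy1.symm, by rw [hy4, hy3]⟩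
  · rintro ⟨x, hx1, hx2⟩
    have sxa : star (x * a) = a * x := by rw [← hx2, star_star]
    -- a* = (a*x) * a*
    have e2 : star a = a * x * star a := by
      conv_lhs => rw [hx1, mul_assoc, star_mul, sxa]
    -- a* = a* * (x*a)
    have e3 : star a = star a * (x * a) := by
      conv_lhs => rw [hx1, star_mul, hx2]
    -- w*a = a*x*(w*a)
    have key1 : w * a = a * x * (w * a) := by
      conv_lhs => rw [← h4, star_mul, e2]
      rw [mul_assoc, ← star_mul, h4]
    -- a*w = (a*w)*(x*a)
    have key2 : a * w = a * w * (x * a) := by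
      conv_lhs => rw [← h3, star_mul, e3]
      rw [← mul_assoc, ← star_mul, h3]
    have t1 : a * w * (w * a) = a * w * (a * x * (w * a)) :=
      congrArg (a * w * ·) key1
    have t2 : a * w * (a * x * (w * a)) = a * x * (w * a) := by
      calc a * w * (a * x * (w * a)) = a * w * a * (x * (w * a)) := by
            simp only [mul_assoc]
        _ = a * (x * (w * a)) := by rw [h1]
        _ = a * x * (w * a) := by simp only [mul_assoc]
    have c1 : a * w * (w * a) = w * a := by rw [t1, t2, ← key1]
    have u1 : a * w * (w * a) = a * w * (x * a) * (w * a) :=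
      congrArg (· * (w * a)) key2
    have u2 : a * w * (x * a) * (w * a) = a * w * (x * a) := by
      calc a * w * (x * a) * (w * a) = a * w * (x * (a * w * a)) := by
            simp only [mul_assoc]
        _ = a * w * (x * a) := by rw [h1, mul_assoc]
    have c2 : a * w * (w * a) = a * w := by rw [u1, u2, ← key2]
    have comm : a * w = w * a := by rw [← c2, c1]
    exact ⟨w, h1, h2, comm, h3⟩
end

section
/- Let R be a *-ring and a ∈ R with a ∈ a²R (i.e. a = a²t for some t ∈ R). Then a is an EP element if and only if there exists x ∈ R such that a = axa and (ax)* = xa. -/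
/-- Theorem 2.12: if `a ∈ a²R`, then `a` is EP iff there exists `x`
with `a = a*x*a` and `(a*x)* = x*a`. -/
theorem stmt_9 {R : Type*} [Ring R] [StarRing R] (a : R)
    (h : ∃ t : R, a = a ^ 2 * t) :
    IsEP a ↔ ∃ x : R, a = a * x * a ∧ star (a * x) = x * a := by
  constructor
  · rintro ⟨y, h1, h2, h3, h4⟩
    exact ⟨y, h1.symm, by rw [h4, h3]⟩
  · rintro ⟨x, hax, hst⟩
    obtain ⟨t, ht⟩ := h
    have ht' : a * a * t = a := by rw [← pow_two, ← ht]
    -- a*x = star a * star x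
    have h7' : a * x = star a * star x := by
      have := congrArg star hst
      simpa [star_mul, star_star] using this
    -- star a * (x*a) = star a
    have h4 : star a * (x * a) = star a := by
      calc star a * (x * a) = star a * star (a * x) := by rw [hst]
        _ = star (a * x * a) := (star_mul _ _).symm
        _ = star a := by rw [← hax]
    -- star a = star t * (star a * star a)
    have h5 : star a = star t * (star a * star a) := by
      calc star a = star (a ^ 2 * t) := by rw [← ht]
        _ = star t * (star a * star a) := by rw [star_mul, sq, star_mul]
    -- a = star a * star x * a
    have h7 : star a * star x * a = a := by rw [← h7']; exact hax.symm
    -- star t * star a * a = a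
    have h8 : star t * star a * a = a := by
      calc star t * star a * a
          = star t * (star a * a) := by rw [mul_assoc]
        _ = star t * (star a * (star a * star x * a)) := by rw [h7]
        _ = (star t * (star a * star a)) * (star x * a) := by
              simp only [mul_assoc]
        _ = star a * (star x * a) := by rw [← h5]
        _ = star a * star x * a := by rw [mul_assoc]
        _ = a := h7
    set s := star t * star a * x with hs
    have hsa : s * a = star t * star a := by
      calc s * a = star t * (star a * (x * a)) := by simp only [hs, mul_assoc]
        _ = star t * star a := by rw [h4]
    have hsaa : s * a * a = a := by rw [hsa]; exact h8
    have hat : a * t = s * a := by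
      calc a * t = s * a * a * t := by rw [hsaa]
        _ = s * (a * a * t) := by simp only [mul_assoc]
        _ = s * a := by rw [ht']
    have hasa : a * (s * a) = a := by rw [← hat, ← mul_assoc, ht']
    have hata : a * t * a = a := by rw [hat, hsaa]
    refine ⟨s * a * t, ?_, ?_, ?_, ?_⟩
    · -- a * (s*a*t) * a = a
      calc a * (s * a * t) * a = (a * (s * a)) * t * a := by simp only [mul_assoc]
        _ = a * t * a := by rw [hasa]
        _ = a := hata
    · -- (s*a*t) * a * (s*a*t) = s*a*t
      calc s * a * t * a * (s * a * t)
          = s * (a * t * a) * (s * a * t) := by simp only [mul_assoc]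
        _ = s * a * (s * a * t) := by rw [hata]
        _ = s * (a * (s * a)) * t := by simp only [mul_assoc]
        _ = s * a * t := by rw [hasa]
    · -- a * (s*a*t) = (s*a*t) * a
      calc a * (s * a * t) = (a * (s * a)) * t := by simp only [mul_assoc]
        _ = a * t := by rw [hasa]
        _ = s * a := hat
        _ = s * (a * t * a) := by rw [hata]
        _ = s * a * t * a := by simp only [mul_assoc]
    · -- star (a * (s*a*t)) = a * (s*a*t)
      have hay : a * (s * a * t) = a * t := by
        calc a * (s * a * t) = (a * (s * a)) * t := by simp only [mul_assoc]
          _ = a * t := by rw [hasa]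
      rw [hay]
      calc star (a * t) = star t * star a := by rw [star_mul]
        _ = s * a := hsa.symm
        _ = a * t := hat.symm
end

section
/- Let R be a *-ring and a ∈ R with a ∈ Ra² (i.e. a = ta² for some t ∈ R). Then a is an EP element if and only if there exists x ∈ R such that a = axa and (ax)* = xa. -/
/-- Proposition 2.13: if `a ∈ Ra²`, then `a` is EP iff there exists `x`
with `a = a*x*a` and `(a*x)* = x*a`. -/
theorem stmt_10 {R : Type*} [Ring R] [StarRing R] (a : R)
    (h : ∃ t : R, a = t * a ^ 2) :
    IsEP a ↔ ∃ x : R, a = a * x * a ∧ star (a * x) = x * a := by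
  obtain ⟨t, ht⟩ := h
  constructor
  · rintro ⟨y, h1, h2, h3, h4⟩
    exact ⟨y, h1.symm, by rw [h4, h3]⟩
  · rintro ⟨x, hax, hst⟩
    have ht' : t * a * a = a := by
      rw [pow_two] at ht
      rw [mul_assoc]; exact ht.symm
    have hs1 : star x * star a = x * a := by rw [← star_mul]; exact hst
    have hs2 : star a * star x = a * x := by
      have h := congrArg star hst
      rw [star_star, star_mul] at h
      exact h.symm
    -- a* = a x a*
    have ha1 : star a = a * x * star a := by
      have h := congrArg star hax
      rw [star_mul, star_mul] at h
      calc star a = star a * (star x * star a) := h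
        _ = star a * star x * star a := by rw [mul_assoc]
        _ = a * x * star a := by rw [hs2]
    -- a* = t a a*
    have ha2 : star a = t * a * star a := by
      calc star a = a * x * star a := ha1
        _ = t * a * a * x * star a := by rw [ht']
        _ = t * a * (a * x * star a) := by noncomm_ring
        _ = t * a * star a := by rw [← ha1]
    -- a = a a* t*
    have ha3 : a = a * star a * star t := by
      calc a = star (star a) := (star_star a).symm
        _ = star (t * a * star a) := by rw [← ha2]
        _ = a * star a * star t := by simp [star_mul, star_star, mul_assoc]
    -- a = a² s  with  s = x a* t*
    have ha4 : a * (a * (x * star a * star t)) = a := by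
      calc a * (a * (x * star a * star t)) = a * (a * x * star a) * star t := by noncomm_ring
        _ = a * star a * star t := by rw [← ha1]
        _ = a := ha3.symm
    -- a s = t a
    have hp : a * (x * star a * star t) = t * a := by
      have h : t * a = a * (x * star a * star t) := by
        calc t * a = t * (a * (a * (x * star a * star t))) := by rw [ha4]
          _ = t * a * a * (x * star a * star t) := by noncomm_ring
          _ = a * (x * star a * star t) := by rw [ht']
      exact h.symm
    refine ⟨t * a * (x * star a * star t), ?_, ?_, ?_, ?_⟩
    all_goals {
      have hay : a * (t * a * (x * star a * star t)) = t * a := by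
        calc a * (t * a * (x * star a * star t))
            = a * (a * (x * star a * star t) * (x * star a * star t)) := by rw [← hp]
          _ = a * (a * (x * star a * star t)) * (x * star a * star t) := by noncomm_ring
          _ = a * (x * star a * star t) := by rw [ha4]
          _ = t * a := hp
      have hya : t * a * (x * star a * star t) * a = t * a := by
        calc t * a * (x * star a * star t) * a
            = t * (a * (x * star a * star t)) * a := by noncomm_ring
          _ = t * (t * a) * a := by rw [hp]
          _ = t * (t * a * a) := by noncomm_ring
          _ = t * a := by rw [ht']
      have hata : a * (t * a) = a := by rw [← hp]; exact ha4
      have hpp : t * a * (t * a) = t * a := by rw [mul_assoc t a, hata]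
      first
      | (rw [hay]; exact ht')
      | (rw [hya, ← mul_assoc, hpp])
      | (rw [hay, hya])
      | (rw [hay, ← hp]
         have hss : star (a * (x * star a * star t)) = t * a := by
           calc star (a * (x * star a * star t))
               = t * (a * (star x * star a)) := by simp [star_mul, star_star, mul_assoc]
             _ = t * (a * (x * a)) := by rw [hs1]
             _ = t * (a * x * a) := by noncomm_ring
             _ = t * a := by rw [← hax]
         rw [hss, hp])
    }
end

section
/- Let R be a *-ring and a ∈ R be group invertible, i.e. there exists g ∈ R with aga = a, gag = g, and ag = ga. Then a is an EP element if and only if there exists x ∈ R such that a = axa and (ax)* = xa. -/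
/-- Corollary 2.14: if `a` is group invertible, then `a` is EP iff
there exists `x` with `a = a*x*a` and `(a*x)* = x*a`. -/
theorem stmt_11 {R : Type*} [Ring R] [StarRing R] (a : R)
    (hg : ∃ g : R, a * g * a = a ∧ g * a * g = g ∧ a * g = g * a) :
    IsEP a ↔ ∃ x : R, a = a * x * a ∧ star (a * x) = x * a := by
  constructor
  · rintro ⟨y, h1, h2, h3, h4⟩
    exact ⟨y, h1.symm, by rw [h4, h3]⟩
  · rintro ⟨x, hx1, hx2⟩
    obtain ⟨g, hg1, hg2, hg3⟩ := hg
    -- a * (a*g) = a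
    have haf : a * (a * g) = a := by
      rw [hg3, ← mul_assoc, hg1]
    -- star f = star f * (x*a)
    have hfa : star (a * g) = star (a * g) * (x * a) := by
      have hef : a * x * (a * g) = a * g := by rw [← mul_assoc, ← hx1]
      calc star (a * g) = star (a * x * (a * g)) := by rw [hef]
        _ = star (a * g) * star (a * x) := by rw [star_mul]
        _ = star (a * g) * (x * a) := by rw [hx2]
    -- star f = star f * f
    have hff : star (a * g) = star (a * g) * (a * g) := by
      calc star (a * g) = star (a * g) * (x * a) := hfa
        _ = star (a * g) * (x * (a * (a * g))) := by rw [haf]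
        _ = star (a * g) * (x * a) * (a * g) := by
            simp only [mul_assoc]
        _ = star (a * g) * (a * g) := by rw [← hfa]
    have hsym : star (a * g) = a * g := by
      calc star (a * g) = star (a * g) * (a * g) := hff
        _ = star (a * g) * star (star (a * g)) := by rw [star_star]
        _ = star (star (a * g) * (a * g)) := (star_mul _ _).symm
        _ = star (star (a * g)) := by rw [← hff]
        _ = a * g := star_star _
    exact ⟨g, hg1, hg2, hg3, hsym⟩
end

section
/- Let R be a *-ring and a ∈ R. Then a is central EP (CEP) if and only if a is central group invertible and Moore–Penrose invertible and some element z ∈ R is simultaneously a central group inverse and a Moore–Penrose inverse of a (i.e. z satisfies aza = a, zaz = z, za in the center of R, (az)* = az, and (za)* = za). -/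
/-- An element `z` of a ring is central if it commutes with every element. -/
def IsCentral {R : Type*} [Ring R] (z : R) : Prop := ∀ r : R, z * r = r * z

/-- An element `a` of a *-ring is central EP (CEP) if there exists `x` such that
`a*x*a = a`, `(a*x)* = x*a`, and `x*a` is central. -/
def IsCEP {R : Type*} [Ring R] [StarRing R] (a : R) : Prop :=
  ∃ x : R, a * x * a = a ∧ star (a * x) = x * a ∧ IsCentral (x * a)

/-- Theorem 3.4: `a` is CEP iff `a` is central group invertible and
Moore–Penrose invertible, and some `z` is simultaneously a central group inverse
and a Moore–Penrose inverse of `a`, i.e. `a*z*a = a`, `z*a*z = z`,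
`z*a` is central, `(a*z)* = a*z` and `(z*a)* = z*a`. -/
theorem stmt_12 {R : Type*} [Ring R] [StarRing R] (a : R) :
    IsCEP a ↔
      ((∃ x : R, a ^ 2 * x = a ∧ x * a * x = x ∧ IsCentral (x * a)) ∧
       (∃ w : R, a * w * a = a ∧ w * a * w = w ∧
          star (a * w) = a * w ∧ star (w * a) = w * a) ∧
       (∃ z : R, a * z * a = a ∧ z * a * z = z ∧ IsCentral (z * a) ∧
          star (a * z) = a * z ∧ star (z * a) = z * a)) := by
  constructor
  · rintro ⟨x, hxa, hst, hc⟩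
    have hax_star : a * x = star (x * a) := by rw [← hst, star_star]
    have hea : (x * a) * a = a := by rw [hc a, ← mul_assoc, hxa]
    have hfc : ∀ r : R, (a * x) * r = r * (a * x) := by
      intro r
      rw [hax_star]
      calc star (x * a) * r = star (x * a) * star (star r) := by rw [star_star]
        _ = star (star r * (x * a)) := (star_mul _ _).symm
        _ = star ((x * a) * star r) := by rw [hc (star r)]
        _ = star (star r) * star (x * a) := by rw [star_mul]
        _ = r * star (x * a) := by rw [star_star]
    have haf : a * (a * x) = a := by rw [← hfc a, hxa]
    have hef : x * a = a * x := by
      have h1 : x * a = (x * a) * (a * x) := by rw [mul_assoc, haf]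
      have h2 : a * x = (x * a) * (a * x) := by rw [← mul_assoc, hea]
      rw [h1, ← h2]
    have hee : (x * a) * (x * a) = x * a := by
      have h1 : x * a = (x * a) * (a * x) := by rw [mul_assoc, haf]
      rw [← hef] at h1
      exact h1.symm
    have hza : (x * (x * a)) * a = x * a := by rw [mul_assoc, hea]
    have haz : a * (x * (x * a)) = x * a := by rw [← mul_assoc, ← hef, hee]
    have haza : a * (x * (x * a)) * a = a := by rw [haz, hea]
    have hzaz : (x * (x * a)) * a * (x * (x * a)) = x * (x * a) := by
      rw [hza, hc (x * (x * a)), mul_assoc, hee]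
    have ha2z : a ^ 2 * (x * (x * a)) = a := by
      rw [pow_two, mul_assoc, haz, ← mul_assoc, hxa]
    have hsx : star (x * a) = x * a := by
      calc star (x * a) = star (a * x) := by rw [← hef]
        _ = x * a := hst
    have hstar_az : star (a * (x * (x * a))) = a * (x * (x * a)) := by rw [haz]; exact hsx
    have hstar_za : star ((x * (x * a)) * a) = (x * (x * a)) * a := by rw [hza]; exact hsx
    have hcza : IsCentral ((x * (x * a)) * a) := by rw [hza]; exact hc
    exact ⟨⟨x * (x * a), ha2z, hzaz, hcza⟩,
           ⟨x * (x * a), haza, hzaz, hstar_az, hstar_za⟩,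
           ⟨x * (x * a), haza, hzaz, hcza, hstar_az, hstar_za⟩⟩
  · rintro ⟨⟨x, hx1, _, _⟩, _, ⟨z, hz1, _, hzc, hsaz, _⟩⟩
    have h1 : z * a * a = a := by rw [hzc a, ← mul_assoc, hz1]
    have h2 : z * a = a * x := by
      conv_lhs => rw [← hx1]
      rw [pow_two, ← mul_assoc, ← mul_assoc, h1]
    have h3 : a * z = z * a := by
      calc a * z = (z * a * a) * z := by rw [h1]
        _ = (z * a) * (a * z) := by rw [mul_assoc]
        _ = (a * z) * (z * a) := hzc (a * z)
        _ = (a * z) * (a * x) := by rw [h2]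
        _ = (a * z * a) * x := by rw [← mul_assoc]
        _ = a * x := by rw [hz1]
        _ = z * a := h2.symm
    exact ⟨z, hz1, by rw [hsaz, h3], hzc⟩
end

section
/- Let R be a *-ring and a ∈ R. Then a is central EP (CEP) if and only if there exists a unique z ∈ R such that aza = a, zaz = z, (az)* = za, and za lies in the center of R. (Such a z is called the CEP-inverse of a.) -/
private lemma cep_uniq {R : Type*} [Ring R] [StarRing R] (a z₁ z₂ : R)
    (h₁ : a * z₁ * a = a ∧ z₁ * a * z₁ = z₁ ∧ star (a * z₁) = z₁ * a ∧ IsCentral (z₁ * a))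
    (h₂ : a * z₂ * a = a ∧ z₂ * a * z₂ = z₂ ∧ star (a * z₂) = z₂ * a ∧ IsCentral (z₂ * a)) :
    z₁ = z₂ := by
  obtain ⟨p₁, q₁, s₁, c₁⟩ := h₁
  obtain ⟨p₂, q₂, s₂, c₂⟩ := h₂
  have e12 : z₁ * a = (z₁ * a) * (z₂ * a) := by
    conv_lhs => rw [← p₂]
    simp [mul_assoc]
  have e21 : z₂ * a = (z₂ * a) * (z₁ * a) := by
    conv_lhs => rw [← p₁]
    simp [mul_assoc]
  have eq_e : z₁ * a = z₂ * a := by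
    rw [e12, ← c₂ (z₁ * a), ← e21]
  have az : a * z₁ = a * z₂ := by
    have t₁ : a * z₁ = star (z₁ * a) := by rw [← s₁, star_star]
    have t₂ : a * z₂ = star (z₂ * a) := by rw [← s₂, star_star]
    rw [t₁, t₂, eq_e]
  calc z₁ = z₁ * a * z₁ := q₁.symm
    _ = z₂ * a * z₁ := by rw [eq_e]
    _ = z₂ * (a * z₁) := mul_assoc _ _ _
    _ = z₂ * (a * z₂) := by rw [az]
    _ = z₂ * a * z₂ := (mul_assoc _ _ _).symm
    _ = z₂ := q₂

/-- Proposition 3.8: `a` is CEP iff there exists a unique `z` with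
`a*z*a = a`, `z*a*z = z`, `(a*z)* = z*a`, and `z*a` central
(such a `z` is the CEP-inverse of `a`). -/
theorem stmt_13 {R : Type*} [Ring R] [StarRing R] (a : R) :
    IsCEP a ↔
      ∃! z : R, a * z * a = a ∧ z * a * z = z ∧
        star (a * z) = z * a ∧ IsCentral (z * a) := by
  constructor
  · rintro ⟨x, h1, h2, h3⟩
    have h1' : a * (x * a) = a := by rw [← mul_assoc, h1]
    have za : x * a * x * a = x * a := by
      calc x * a * x * a = x * (a * (x * a)) := by simp [mul_assoc]
        _ = x * a := by rw [h1']
    have az : a * (x * a * x) = a * x := by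
      calc a * (x * a * x) = a * (x * a) * x := by simp [mul_assoc]
        _ = a * x := by rw [h1']
    have hp : a * (x * a * x) * a = a := by rw [az, h1]
    have h1'' : a * (x * (a * x)) = a * x := by
      calc a * (x * (a * x)) = a * (x * a) * x := by simp [mul_assoc]
        _ = a * x := by rw [h1']
    have hq : x * a * x * a * (x * a * x) = x * a * x := by
      rw [za]; simp only [mul_assoc]; rw [h1'']
    have hs : star (a * (x * a * x)) = x * a * x * a := by
      rw [az, za, h2]
    have hc : IsCentral (x * a * x * a) := by rw [za]; exact h3
    exact ⟨x * a * x, ⟨hp, hq, hs, hc⟩, fun y hy => cep_uniq a y (x * a * x) hy ⟨hp, hq, hs, hc⟩⟩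
  · rintro ⟨z, ⟨p, _, s, c⟩, _⟩
    exact ⟨z, p, s, c⟩
end

section
/- Let R be a *-ring and a ∈ R. Then a is central EP (CEP) if and only if a is an EP element whose group-and-Moore–Penrose inverse y (satisfying aya = a, yay = y, ay = ya, (ay)* = ay) has the property that the idempotent 1 − ya lies in the center of R. -/
/-- Proposition 3.10: `a` is CEP iff `a` is EP with group-and-Moore–Penrose
inverse `y` such that the idempotent `1 - y*a` is central. -/
theorem stmt_14 {R : Type*} [Ring R] [StarRing R] (a : R) :
    IsCEP a ↔
      ∃ y : R, (a * y * a = a ∧ y * a * y = y ∧ a * y = y * a ∧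
        star (a * y) = a * y) ∧ IsCentral (1 - y * a) := by
  constructor
  · rintro ⟨x, h1, h2, h3⟩
    set e : R := x * a with he
    -- e is idempotent
    have hee : e * e = e := by
      calc e * e = x * (a * x * a) := by rw [he]; noncomm_ring
        _ = x * a := by rw [h1]
        _ = e := rfl
    -- star e = a * x
    have hs : star e = a * x := by
      rw [← h2, star_star]
    -- star e is idempotent
    have hss : star e * star e = star e := by
      rw [hs]
      calc a * x * (a * x) = (a * x * a) * x := by noncomm_ring
        _ = a * x := by rw [h1]
    -- e * star e = star e
    have hes : e * star e = star e := by
      have h4 : a * x * a = e * a := by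
        calc a * x * a = a * (x * a) := by noncomm_ring
          _ = a * e := rfl
          _ = e * a := (h3 a).symm
      have key : star e * star e = e * star e := by
        rw [hs]
        calc a * x * (a * x) = (a * x * a) * x := by noncomm_ring
          _ = e * a * x := by rw [h4]
          _ = e * (a * x) := mul_assoc _ _ _
      rw [← key]; exact hss
    -- hence star e = e
    have hse : star e = e := by
      have h6 := congrArg star hes
      rw [star_mul, star_star] at h6
      rw [← hes]; exact h6
    have hae : a * e = a := by
      calc a * e = a * (x * a) := rfl
        _ = a * x * a := (mul_assoc _ _ _).symm
        _ = a := h1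
    have hay : a * (e * x) = e := by
      calc a * (e * x) = a * e * x := (mul_assoc _ _ _).symm
        _ = e * a * x := by rw [h3 a]
        _ = e * (a * x) := mul_assoc _ _ _
        _ = e * star e := by rw [hs]
        _ = star e := hes
        _ = e := hse
    have hya : e * x * a = e := by
      calc e * x * a = e * (x * a) := mul_assoc _ _ _
        _ = e * e := rfl
        _ = e := hee
    refine ⟨e * x, ⟨?_, ?_, ?_, ?_⟩, ?_⟩
    · rw [hay, h3 a]; exact hae
    · rw [hya, ← mul_assoc]; rw [hee]
    · rw [hay, hya]
    · rw [hay, hse]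
    · intro r
      rw [hya, sub_mul, mul_sub, one_mul, mul_one, h3 r]
  · rintro ⟨y, ⟨h1, h2, h3, h4⟩, h5⟩
    refine ⟨y, h1, by rw [h4, h3], ?_⟩
    intro r
    have h := h5 r
    rw [sub_mul, mul_sub, one_mul, mul_one] at h
    exact sub_right_inj.mp h
end

section
/- Let R be a *-ring and a ∈ R. Then a is central EP (CEP) if and only if there exist a unit u ∈ R and a central projection p ∈ R (p = p² = p* and p belongs to the center of R) such that a = u + p and up = −p. Moreover, such u and p are unique. -/
/-- A central projection is `p` with `p = p² = p*` and `p` central. -/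
def IsCentralProjection {R : Type*} [Ring R] [StarRing R] (p : R) : Prop :=
  p * p = p ∧ star p = p ∧ IsCentral p

/-- Proposition 3.12: `a` is CEP iff there exist a unit `u` and a central
projection `p` with `a = u + p` and `u*p = -p`; moreover such `u` and `p`
are unique. -/
theorem stmt_15 {R : Type*} [Ring R] [StarRing R] (a : R) :
    (IsCEP a ↔ ∃ u p : R, IsUnit u ∧ IsCentralProjection p ∧
        a = u + p ∧ u * p = -p) ∧
    (∀ u p u' p' : R,
      (IsUnit u ∧ IsCentralProjection p ∧ a = u + p ∧ u * p = -p) →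
      (IsUnit u' ∧ IsCentralProjection p' ∧ a = u' + p' ∧ u' * p' = -p') →
      u = u' ∧ p = p') := by
  constructor
  · constructor
    · rintro ⟨x, h1, h2, h3⟩
      -- e := x * a is a central self-adjoint idempotent acting as identity on a
      have hee : (x * a) * (x * a) = x * a := by
        calc (x * a) * (x * a) = x * (a * x * a) := by noncomm_ring
        _ = x * a := by rw [h1]
      have hae : a * (x * a) = a := by rw [← mul_assoc, h1]
      have hea : (x * a) * a = a := by rw [h3 a, hae]
      have hsf : star (x * a) = a * x := by rw [← h2, star_star]
      -- a * x is central
      have h3' : IsCentral (a * x) := by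
        intro r
        have h := congrArg star (h3 (star r))
        rw [star_mul (x * a) (star r), star_mul (star r) (x * a), star_star,
          hsf] at h
        exact h.symm
      have haf : a * (a * x) = a := by rw [← h3' a]; exact h1
      have hef : (x * a) * (a * x) = x * a := by
        calc (x * a) * (a * x) = x * (a * (a * x)) := by noncomm_ring
        _ = x * a := by rw [haf]
      -- e is self-adjoint
      have hse : star (x * a) = x * a := by
        conv_lhs => rw [← hef]
        rw [star_mul, h2, hsf, hef]
      have hax : a * x = x * a := by rw [← hsf, hse]
      -- the unit and projection
      refine ⟨a - 1 + x * a, 1 - x * a, ?_, ⟨?_, ?_, ?_⟩, ?_, ?_⟩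
      · refine isUnit_iff_exists.mpr ⟨(x * a) * x * (x * a) - 1 + x * a, ?_, ?_⟩
        · have k1 : a * ((x * a) * x * (x * a)) = x * a := by
            calc a * ((x * a) * x * (x * a)) = (a * (x * a)) * (x * (x * a)) := by
                  simp only [mul_assoc]
            _ = (a * x) * (x * a) := by rw [hae, ← mul_assoc]
            _ = x * a := by rw [hax, hee]
          have k2 : (x * a) * ((x * a) * x * (x * a)) = (x * a) * x * (x * a) := by
            calc (x * a) * ((x * a) * x * (x * a))
                = ((x * a) * (x * a)) * (x * (x * a)) := by
                  simp only [mul_assoc]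
            _ = (x * a) * (x * (x * a)) := by rw [hee]
            _ = (x * a) * x * (x * a) := by simp only [mul_assoc]
          calc (a - 1 + x * a) * ((x * a) * x * (x * a) - 1 + x * a)
              = a * ((x * a) * x * (x * a)) - a + a * (x * a)
                - ((x * a) * x * (x * a)) + 1 - (x * a)
                + (x * a) * ((x * a) * x * (x * a)) - (x * a) + (x * a) * (x * a) := by
                noncomm_ring
          _ = 1 := by rw [k1, k2, hae, hee]; abel
        · have k1 : ((x * a) * x * (x * a)) * a = x * a := by
            calc ((x * a) * x * (x * a)) * a = (x * a) * x * ((x * a) * a) := by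
                  simp only [mul_assoc]
            _ = (x * a) * (x * a) := by rw [hea, mul_assoc]
            _ = x * a := hee
          have k2 : ((x * a) * x * (x * a)) * (x * a) = (x * a) * x * (x * a) := by
            calc ((x * a) * x * (x * a)) * (x * a)
                = (x * a) * x * ((x * a) * (x * a)) := by simp only [mul_assoc]
            _ = (x * a) * x * (x * a) := by rw [hee]
          calc ((x * a) * x * (x * a) - 1 + x * a) * (a - 1 + x * a)
              = ((x * a) * x * (x * a)) * a - ((x * a) * x * (x * a))
                + ((x * a) * x * (x * a)) * (x * a) - a + 1 - (x * a)
                + (x * a) * a - (x * a) + (x * a) * (x * a) := by noncomm_ring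
          _ = 1 := by rw [k1, k2, hea, hee]; abel
      · calc (1 - x * a) * (1 - x * a) = 1 - (x * a) - (x * a) + (x * a) * (x * a) := by
              noncomm_ring
        _ = 1 - x * a := by rw [hee]; abel
      · rw [star_sub, star_one, hse]
      · intro r
        calc (1 - x * a) * r = r - (x * a) * r := by noncomm_ring
        _ = r - r * (x * a) := by rw [h3 r]
        _ = r * (1 - x * a) := by noncomm_ring
      · abel
      · calc (a - 1 + x * a) * (1 - x * a)
            = a - a * (x * a) - 1 + (x * a) + (x * a) - (x * a) * (x * a) := by
              noncomm_ring
        _ = -(1 - x * a) := by rw [hae, hee]; abel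
    · rintro ⟨u, p, hu, ⟨hp2, hps, hpc⟩, ha, hup⟩
      obtain ⟨v, huv, hvu⟩ := isUnit_iff_exists.mp hu
      have hvp : v * p = -p := by
        have h : p = -(v * p) := by
          have : v * (u * p) = v * (-p) := by rw [hup]
          rw [← mul_assoc, hvu, one_mul, mul_neg] at this
          exact this
        rw [← neg_neg (v * p), ← h]
      have hpv : p * v = -p := by rw [hpc v]; exact hvp
      have hpu : p * u = -p := by rw [hpc u]; exact hup
      refine ⟨v * (1 - p), ?_, ?_, ?_⟩
      · have hxa : (v * (1 - p)) * a = 1 - p := by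
          calc (v * (1 - p)) * a = v * u + v * p - (v * p) * u - (v * p) * p := by
                rw [ha]; noncomm_ring
          _ = 1 + -p - (-p) * u - (-p) * p := by rw [hvu, hvp]
          _ = 1 - p - -(p * u) + p * p := by noncomm_ring
          _ = 1 - p := by rw [hpu, hp2]; abel
        rw [mul_assoc, hxa]
        rw [ha]
        calc (u + p) * (1 - p) = u - u * p + p - p * p := by noncomm_ring
        _ = u + p := by rw [hup, hp2]; abel
      · have hax : a * (v * (1 - p)) = 1 - p := by
          calc a * (v * (1 - p)) = u * v - (u * v) * p + p * v - (p * v) * p := by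
                rw [ha]; noncomm_ring
          _ = 1 - 1 * p + -p - (-p) * p := by rw [huv, hpv]
          _ = 1 - p - p + p * p := by noncomm_ring
          _ = 1 - p := by rw [hp2]; abel
        have hxa : (v * (1 - p)) * a = 1 - p := by
          calc (v * (1 - p)) * a = v * u + v * p - (v * p) * u - (v * p) * p := by
                rw [ha]; noncomm_ring
          _ = 1 + -p - (-p) * u - (-p) * p := by rw [hvu, hvp]
          _ = 1 - p - -(p * u) + p * p := by noncomm_ring
          _ = 1 - p := by rw [hpu, hp2]; abel
        rw [hax, hxa, star_sub, star_one, hps]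
      · have hxa : (v * (1 - p)) * a = 1 - p := by
          calc (v * (1 - p)) * a = v * u + v * p - (v * p) * u - (v * p) * p := by
                rw [ha]; noncomm_ring
          _ = 1 + -p - (-p) * u - (-p) * p := by rw [hvu, hvp]
          _ = 1 - p - -(p * u) + p * p := by noncomm_ring
          _ = 1 - p := by rw [hpu, hp2]; abel
        rw [hxa]
        intro r
        calc (1 - p) * r = r - p * r := by noncomm_ring
        _ = r - r * p := by rw [hpc r]
        _ = r * (1 - p) := by noncomm_ring
  · rintro u p u' p' ⟨hu, ⟨hp2, hps, hpc⟩, ha, hup⟩ ⟨hu', ⟨hp2', hps', hpc'⟩, ha', hup'⟩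
    obtain ⟨v, huv, hvu⟩ := isUnit_iff_exists.mp hu
    have hvp : v * p = -p := by
      have h : p = -(v * p) := by
        have : v * (u * p) = v * (-p) := by rw [hup]
        rw [← mul_assoc, hvu, one_mul, mul_neg] at this
        exact this
      rw [← neg_neg (v * p), ← h]
    -- a * p' = 0
    have hap' : a * p' = 0 := by
      rw [ha']
      calc (u' + p') * p' = u' * p' + p' * p' := by noncomm_ring
      _ = -p' + p' := by rw [hup', hp2']
      _ = 0 := by abel
    -- u * p' = - p * p'
    have hupp' : u * p' = -(p * p') := by
      have h : u * p' + p * p' = 0 := by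
        calc u * p' + p * p' = (u + p) * p' := by noncomm_ring
        _ = 0 := by rw [← ha, hap']
      exact eq_neg_of_add_eq_zero_left h
    -- p' = p * p'
    have hpp' : p' = p * p' := by
      calc p' = (v * u) * p' := by rw [hvu, one_mul]
      _ = v * (u * p') := by rw [mul_assoc]
      _ = v * (-(p * p')) := by rw [hupp']
      _ = -((v * p) * p') := by rw [mul_neg, mul_assoc]
      _ = -((-p) * p') := by rw [hvp]
      _ = p * p' := by noncomm_ring
    -- symmetric: p = p' * p
    obtain ⟨v', huv', hvu'⟩ := isUnit_iff_exists.mp hu'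
    have hvp' : v' * p' = -p' := by
      have h : p' = -(v' * p') := by
        have : v' * (u' * p') = v' * (-p') := by rw [hup']
        rw [← mul_assoc, hvu', one_mul, mul_neg] at this
        exact this
      rw [← neg_neg (v' * p'), ← h]
    have hap : a * p = 0 := by
      rw [ha]
      calc (u + p) * p = u * p + p * p := by noncomm_ring
      _ = -p + p := by rw [hup, hp2]
      _ = 0 := by abel
    have hupp : u' * p = -(p' * p) := by
      have h : u' * p + p' * p = 0 := by
        calc u' * p + p' * p = (u' + p') * p := by noncomm_ring
        _ = 0 := by rw [← ha', hap]
      exact eq_neg_of_add_eq_zero_left h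
    have hpp : p = p' * p := by
      calc p = (v' * u') * p := by rw [hvu', one_mul]
      _ = v' * (u' * p) := by rw [mul_assoc]
      _ = v' * (-(p' * p)) := by rw [hupp]
      _ = -((v' * p') * p) := by rw [mul_neg, mul_assoc]
      _ = -((-p') * p) := by rw [hvp']
      _ = p' * p := by noncomm_ring
    have hpe : p = p' := by
      rw [hpp, hpc' p, ← hpp']
    constructor
    · have : u + p = u' + p' := by rw [← ha, ← ha']
      rw [hpe] at this
      exact add_right_cancel this
    · exact hpe
end

section
/- Let R be a *-ring and a ∈ R. Then a is central EP (CEP) if and only if there exist a unit u ∈ R and a central projection q ∈ R (q = q² = q* and q belongs to the center of R) such that a = uq. Moreover, such a q is unique. -/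
/-- Proposition 3.13: `a` is CEP iff there exist a unit `u` and a central
projection `q` with `a = u*q`; moreover such a `q` is unique. -/
theorem stmt_16 {R : Type*} [Ring R] [StarRing R] (a : R) :
    (IsCEP a ↔ ∃ u q : R, IsUnit u ∧ IsCentralProjection q ∧ a = u * q) ∧
    (∀ u q u' q' : R,
      (IsUnit u ∧ IsCentralProjection q ∧ a = u * q) →
      (IsUnit u' ∧ IsCentralProjection q' ∧ a = u' * q') →
      q = q') := by
  constructor
  · constructor
    · rintro ⟨x, h1, h2, h3⟩
      -- q := x * a
      have hsq : star (x * a) = a * x := by rw [← h2, star_star]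
      have hq2 : (x * a) * (x * a) = x * a := by
        calc (x * a) * (x * a) = x * (a * x * a) := by noncomm_ring
          _ = x * a := by rw [h1]
      have hqs : (x * a) * (a * x) = a * x := by
        calc (x * a) * (a * x) = ((x * a) * a) * x := by noncomm_ring
          _ = (a * (x * a)) * x := by rw [h3 a]
          _ = (a * x * a) * x := by noncomm_ring
          _ = a * x := by rw [h1]
      have hqeq : x * a = a * x := by
        have h := congrArg star hqs
        rw [star_mul, h2, hsq] at h
        -- h : (x*a) * (a*x) = x*a
        rw [← hqs, h]
      have hstar : star (x * a) = x * a := by rw [hsq, hqeq]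
      have haq : a * (x * a) = a := by rw [← mul_assoc, h1]
      have hqa : (x * a) * a = a := by rw [h3 a, haq]
      refine ⟨a + 1 - x * a, x * a, ?_, ⟨hq2, hstar, h3⟩, ?_⟩
      · refine ⟨⟨a + 1 - x * a, x * (x * a) + 1 - x * a, ?_, ?_⟩, rfl⟩
        · -- (a + 1 - q)(x*q + 1 - q) = 1
          have e1 : a * (x * (x * a)) = x * a := by
            rw [hqeq]
            calc a * (x * (a * x)) = (a * x * a) * x := by noncomm_ring
              _ = a * x := by rw [h1]
          have e2 : (x * a) * (x * (x * a)) = x * (x * a) := by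
            calc (x * a) * (x * (x * a)) = ((x * a) * x) * (x * a) := by noncomm_ring
              _ = (x * (x * a)) * (x * a) := by rw [h3 x]
              _ = x * ((x * a) * (x * a)) := by noncomm_ring
              _ = x * (x * a) := by rw [hq2]
          calc (a + 1 - x * a) * (x * (x * a) + 1 - x * a)
              = a * (x * (x * a)) + a - a * (x * a) + x * (x * a) + 1 - x * a
                - (x * a) * (x * (x * a)) - x * a + (x * a) * (x * a) := by noncomm_ring
            _ = 1 := by rw [e1, haq, e2, hq2]; abel
        · -- (x*q + 1 - q)(a + 1 - q) = 1
          have e3 : (x * (x * a)) * a = x * a := by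
            calc (x * (x * a)) * a = x * ((x * a) * a) := by noncomm_ring
              _ = x * a := by rw [hqa]
          have e4 : (x * (x * a)) * (x * a) = x * (x * a) := by
            calc (x * (x * a)) * (x * a) = x * ((x * a) * (x * a)) * 1 := by noncomm_ring
              _ = x * (x * a) := by rw [hq2, mul_one]
          calc (x * (x * a) + 1 - x * a) * (a + 1 - x * a)
              = (x * (x * a)) * a + x * (x * a) - (x * (x * a)) * (x * a) + a + 1 - x * a
                - (x * a) * a - x * a + (x * a) * (x * a) := by noncomm_ring
            _ = 1 := by rw [e3, e4, hqa, hq2]; abel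
      · -- a = (a + 1 - q) * q
        calc a = a * (x * a) + x * a - (x * a) * (x * a) := by rw [haq, hq2]; abel
          _ = (a + 1 - x * a) * (x * a) := by noncomm_ring
    · rintro ⟨u, q, hu, ⟨hq2, hqs, hqc⟩, rfl⟩
      obtain ⟨v, hvu, huv⟩ : ∃ v : R, v * u = 1 ∧ u * v = 1 := by
        obtain ⟨w, rfl⟩ := hu
        exact ⟨↑w⁻¹, w.inv_mul, w.mul_inv⟩
      have key : (u * q) * (v * q) = q := by
        calc (u * q) * (v * q) = u * (q * v) * q := by noncomm_ring
          _ = u * (v * q) * q := by rw [hqc v]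
          _ = (u * v) * (q * q) := by noncomm_ring
          _ = q := by rw [huv, hq2, one_mul]
      have key2 : (v * q) * (u * q) = q := by
        calc (v * q) * (u * q) = v * (q * u) * q := by noncomm_ring
          _ = v * (u * q) * q := by rw [hqc u]
          _ = (v * u) * (q * q) := by noncomm_ring
          _ = q := by rw [hvu, hq2, one_mul]
      refine ⟨v * q, ?_, ?_, ?_⟩
      · rw [key]
        calc q * (u * q) = (q * u) * q := by noncomm_ring
          _ = (u * q) * q := by rw [hqc u]
          _ = u * (q * q) := by noncomm_ring
          _ = u * q := by rw [hq2]
      · rw [key, key2, hqs]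
      · rw [key2]; exact hqc
  · rintro u q u' q' ⟨hu, ⟨hq2, hqs, hqc⟩, rfl⟩ ⟨hu', ⟨hq2', hqs', hqc'⟩, heq⟩
    obtain ⟨v, hvu, huv⟩ : ∃ v : R, v * u = 1 ∧ u * v = 1 := by
      obtain ⟨w, rfl⟩ := hu
      exact ⟨↑w⁻¹, w.inv_mul, w.mul_inv⟩
    obtain ⟨v', hvu', huv'⟩ : ∃ v' : R, v' * u' = 1 ∧ u' * v' = 1 := by
      obtain ⟨w, rfl⟩ := hu'
      exact ⟨↑w⁻¹, w.inv_mul, w.mul_inv⟩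
    -- q' * a = a, a = u*q, so q'*q = q after cancelling u; similarly q*q' = q'
    have hq'a : q' * (u * q) = u * q := by
      rw [heq]
      calc q' * (u' * q') = (q' * u') * q' := by noncomm_ring
        _ = (u' * q') * q' := by rw [hqc' u']
        _ = u' * (q' * q') := by noncomm_ring
        _ = u' * q' := by rw [hq2']
    have hq'q : q' * q = q := by
      have : u * (q' * q) = u * q := by
        calc u * (q' * q) = (u * q') * q := by noncomm_ring
          _ = (q' * u) * q := by rw [hqc' u]
          _ = q' * (u * q) := by noncomm_ring
          _ = u * q := hq'a
      calc q' * q = (v * u) * (q' * q) := by rw [hvu, one_mul]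
        _ = v * (u * (q' * q)) := by noncomm_ring
        _ = v * (u * q) := by rw [this]
        _ = (v * u) * q := by noncomm_ring
        _ = q := by rw [hvu, one_mul]
    have hqa' : q * (u' * q') = u' * q' := by
      rw [← heq]
      calc q * (u * q) = (q * u) * q := by noncomm_ring
        _ = (u * q) * q := by rw [hqc u]
        _ = u * (q * q) := by noncomm_ring
        _ = u * q := by rw [hq2]
    have hqq' : q * q' = q' := by
      have : u' * (q * q') = u' * q' := by
        calc u' * (q * q') = (u' * q) * q' := by noncomm_ring
          _ = (q * u') * q' := by rw [hqc u']
          _ = q * (u' * q') := by noncomm_ring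
          _ = u' * q' := hqa'
      calc q * q' = (v' * u') * (q * q') := by rw [hvu', one_mul]
        _ = v' * (u' * (q * q')) := by noncomm_ring
        _ = v' * (u' * q') := by rw [this]
        _ = (v' * u') * q' := by noncomm_ring
        _ = q' := by rw [hvu', one_mul]
    rw [← hq'q, ← hqc q', hqq']
end

section
/- Let R be a *-ring and a, b ∈ R. If x ∈ R is a CEP-inverse of a (i.e. axa = a, xax = x, (ax)* = xa, and xa belongs to the center of R) and y ∈ R is a CEP-inverse of b, then yx is a CEP-inverse of ab; in particular, if a and b are central EP then ab is central EP. -/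
/-- A CEP-inverse of `a` is `z` with `a*z*a = a`, `z*a*z = z`,
`(a*z)* = z*a` and `z*a` central. -/
def IsCEPInverse {R : Type*} [Ring R] [StarRing R] (a z : R) : Prop :=
  a * z * a = a ∧ z * a * z = z ∧ star (a * z) = z * a ∧ IsCentral (z * a)

lemma isCentral_mul {R : Type*} [Ring R] {u v : R}
    (hu : IsCentral u) (hv : IsCentral v) : IsCentral (u * v) := by
  intro r
  rw [mul_assoc, hv r, ← mul_assoc, hu r, mul_assoc]

/-- Proposition 3.18: if `x` is a CEP-inverse of `a` and `y` is a CEP-inverse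
of `b`, then `y*x` is a CEP-inverse of `a*b`; in particular `a*b` is CEP. -/
theorem stmt_17 {R : Type*} [Ring R] [StarRing R] (a b x y : R)
    (hx : IsCEPInverse a x) (hy : IsCEPInverse b y) :
    IsCEPInverse (a * b) (y * x) ∧ IsCEP (a * b) := by
  obtain ⟨hx1, hx2, hx3, hx4⟩ := hx
  obtain ⟨hy1, hy2, hy3, hy4⟩ := hy
  have e1 : (a * b) * (y * x) * (a * b) = a * b := by
    calc (a * b) * (y * x) * (a * b) = a * (b * y * (x * a)) * b := by
            noncomm_ring
      _ = a * (x * a * (b * y)) * b := by rw [← hx4 (b * y)]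
      _ = (a * x * a) * (b * y * b) := by noncomm_ring
      _ = a * b := by rw [hx1, hy1]
  have e2 : (y * x) * (a * b) * (y * x) = y * x := by
    calc (y * x) * (a * b) * (y * x) = y * (x * a * (b * y)) * x := by
            noncomm_ring
      _ = y * (b * y * (x * a)) * x := by rw [hx4 (b * y)]
      _ = (y * b * y) * (x * a * x) := by noncomm_ring
      _ = y * x := by rw [hy2, hx2]
  have e3 : star ((a * b) * (y * x)) = (y * x) * (a * b) := by
    calc star ((a * b) * (y * x))
        = star x * (star (b * y) * star a) := by
            simp [star_mul, mul_assoc]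
      _ = star x * (y * b * star a) := by rw [hy3]
      _ = star x * (star a * (y * b)) := by rw [hy4 (star a)]
      _ = star (a * x) * (y * b) := by rw [star_mul, mul_assoc]
      _ = x * a * (y * b) := by rw [hx3]
      _ = (y * x) * (a * b) := by rw [← mul_assoc, hx4 y]; noncomm_ring
  have e4 : IsCentral ((y * x) * (a * b)) := by
    have h : (x * a) * (y * b) = (y * x) * (a * b) := by
      rw [← mul_assoc, hx4 y]; noncomm_ring
    rw [← h]
    exact isCentral_mul hx4 hy4
  exact ⟨⟨e1, e2, e3, e4⟩, ⟨y * x, e1, e3, e4⟩⟩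
end

section
/- Let R be a *-ring and a ∈ R. Then a is central EP (CEP) if and only if there exists a central projection p ∈ R (p = p² = p*, p in the center of R) such that pa = ap = a and a is invertible in the corner ring pRp, i.e. there exists x ∈ R with x = pxp, ax = xa = p. In that case this x is the CEP-inverse of a. -/
/-- Theorem 3.20: `a` is CEP iff there exists a central projection `p` with
`p*a = a*p = a` and `a` invertible in the corner ring `pRp`, i.e. there is
`x = p*x*p` with `a*x = x*a = p`.  In that case this `x` is the CEP-inverse
of `a`. -/
theorem stmt_18 {R : Type*} [Ring R] [StarRing R] (a : R) :
    (IsCEP a ↔ ∃ p : R, IsCentralProjection p ∧ p * a = a ∧ a * p = a ∧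
        ∃ x : R, x = p * x * p ∧ a * x = p ∧ x * a = p) ∧
    (∀ p x : R, IsCentralProjection p → p * a = a → a * p = a →
      x = p * x * p → a * x = p → x * a = p → IsCEPInverse a x) := by
  constructor
  · constructor
    · rintro ⟨x, h1, h2, h3⟩
      -- star (x*a) = a*x
      have hs : star (x * a) = a * x := by rw [← h2, star_star]
      -- a*x is central (star of a central element is central)
      have hax : IsCentral (a * x) := by
        intro r
        have h := congrArg star (h3 (star r))
        rw [star_mul (x * a) (star r), star_mul (star r) (x * a), star_star, hs] at h
        exact h.symm
      -- (a*x)*(x*a) = x*a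
      have e1 : (a * x) * (x * a) = x * a := by
        rw [← mul_assoc, hax x, mul_assoc, h1]
      -- (x*a)*(a*x) = a*x
      have e2 : (x * a) * (a * x) = a * x := by
        rw [← mul_assoc, h3 a, ← mul_assoc a x a, h1]
      -- a*x = x*a
      have he : a * x = x * a := by
        rw [← e2, ← hax (x * a), e1]
      have hpp2 : (x * a) * (x * a) = x * a := by
        rw [mul_assoc x a (x * a), ← mul_assoc a x a, h1]
      have hpz : (x * a) * (x * a * x) = x * a * x := by
        rw [← mul_assoc, hpp2]
      -- p := x*a works
      refine ⟨x * a, ⟨hpp2, ?_, h3⟩, ?_, ?_, x * a * x, ?_, ?_, ?_⟩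
      · rw [hs, he]
      · rw [h3 a, ← mul_assoc a x a, h1]
      · rw [← mul_assoc, h1]
      · conv_rhs => rw [hpz, ← h3 (x * a * x), hpz]
      · rw [← mul_assoc, ← mul_assoc, h1, he]
      · rw [mul_assoc (x * a) x a, hpp2]
    · rintro ⟨p, ⟨hpp, hps, hpc⟩, hpa, hap, x, hx, haxp, hxap⟩
      refine ⟨x, ?_, ?_, ?_⟩
      · rw [haxp, hpa]
      · rw [haxp, hxap, hps]
      · rw [hxap]; exact hpc
  · rintro p x ⟨hpp, hps, hpc⟩ hpa hap hx haxp hxap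
    refine ⟨?_, ?_, ?_, ?_⟩
    · rw [haxp, hpa]
    · rw [hxap]
      conv_lhs => rw [hx]
      rw [← mul_assoc, ← mul_assoc, hpp, ← hx]
    · rw [haxp, hxap, hps]
    · rw [hxap]; exact hpc
end
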